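/- arXiv:1803.07579 — 6 statements merged into one kernel-verified Lean document; each statement's English description precedes it below -/
import Mathlib

section
/- Let f : [0,∞) → ℝ be continuous satisfying (f₁), (f₂), (f₃), and let e, q > 0. Then c_F := sup_{s>0} 4F(s)/(2s² + e q s⁴) is finite, positive, and attained at some s > 0. -/
/-!
Write `g(s) = 4F(s)/(2s² + eqs⁴) = 4(F(s)/s²)/(2 + eqs²)`. Since `f(t) = o(t)` both as `t → 0⁺`
and as `t → ∞`, integrating gives `F(s) = o(s²)` at both ends, so `g` tends to `0` at `0⁺` and at
`∞`. As `g(s₀) > 0`, the continuous `g` then attains its supremum over `(0, ∞)` on a compact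
interval.
-/

open Filter Set Topology MeasureTheory

theorem norm_intervalIntegral_le_of_norm_le_mul_self {E : Type*} [NormedAddCommGroup E]
    [NormedSpace ℝ E] {f : ℝ → E} {a b ε : ℝ} (hab : a ≤ b)
    (h : ∀ t ∈ Ioc a b, ‖f t‖ ≤ ε * t) : ‖∫ t in a..b, f t‖ ≤ ε * (b ^ 2 - a ^ 2) / 2 := by
  calc ‖∫ t in a..b, f t‖ ≤ ∫ t in a..b, ε * t :=
        intervalIntegral.norm_integral_le_of_norm_le hab (ae_of_all _ h)
          ((continuous_const_mul ε).intervalIntegrable a b)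
    _ = ε * (b ^ 2 - a ^ 2) / 2 := by
        rw [intervalIntegral.integral_const_mul, integral_id, mul_div_assoc]

theorem eventually_norm_le_mul_self_of_tendsto_div {f : ℝ → ℝ} {l : Filter ℝ}
    (hf : Tendsto (fun s => f s / s) l (𝓝 0)) (hpos : ∀ᶠ t in l, 0 < t) {ε : ℝ} (hε : 0 < ε) :
    ∀ᶠ t in l, ‖f t‖ ≤ ε * t := by
  filter_upwards [(Metric.tendsto_nhds.1 hf) ε hε, hpos] with t ht htpos
  rw [dist_zero_right, norm_div, Real.norm_of_nonneg htpos.le, div_lt_iff₀ htpos] at ht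
  exact ht.le

theorem tendsto_integral_div_sq_nhdsGT_zero {f : ℝ → ℝ}
    (hf : Tendsto (fun s => f s / s) (𝓝[>] 0) (𝓝 0)) :
    Tendsto (fun s => (∫ t in (0 : ℝ)..s, f t) / s ^ 2) (𝓝[>] 0) (𝓝 0) := by
  refine Metric.tendsto_nhds.2 fun ε hε => ?_
  obtain ⟨δ, hδ, hδsub⟩ := mem_nhdsGT_iff_exists_Ioc_subset.1 <|
    eventually_norm_le_mul_self_of_tendsto_div hf self_mem_nhdsWithin (half_pos hε)
  filter_upwards [Ioo_mem_nhdsGT hδ] with s ⟨hs, hsδ⟩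
  have hs2 : 0 < s ^ 2 := pow_pos hs 2
  have hbound := norm_intervalIntegral_le_of_norm_le_mul_self hs.le
    fun t ht => hδsub ⟨ht.1, ht.2.trans hsδ.le⟩
  rw [dist_zero_right, norm_div, Real.norm_of_nonneg hs2.le, div_lt_iff₀ hs2]
  nlinarith

theorem tendsto_integral_div_sq_atTop {f : ℝ → ℝ} (hfi : ∀ b, IntervalIntegrable f volume 0 b)
    (hf : Tendsto (fun s => f s / s) atTop (𝓝 0)) :
    Tendsto (fun s => (∫ t in (0 : ℝ)..s, f t) / s ^ 2) atTop (𝓝 0) := by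
  refine Metric.tendsto_nhds.2 fun ε hε => ?_
  obtain ⟨N, hN⟩ := eventually_atTop.1 <|
    (eventually_norm_le_mul_self_of_tendsto_div hf (eventually_gt_atTop 0) (half_pos hε)).and
      (eventually_gt_atTop 0)
  have hinit : Tendsto (fun s : ℝ => ‖∫ t in (0 : ℝ)..N, f t‖ / s ^ 2) atTop (𝓝 0) :=
    tendsto_const_nhds.div_atTop (tendsto_pow_atTop two_ne_zero)
  filter_upwards [hinit.eventually_lt_const (half_pos hε), eventually_ge_atTop N]
    with s hinit_lt hNs
  have hs2 : 0 < s ^ 2 := pow_pos ((hN N le_rfl).2.trans_le hNs) 2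
  have htail := norm_intervalIntegral_le_of_norm_le_mul_self hNs fun t ht => (hN t ht.1.le).1
  have hsplit : (∫ t in (0 : ℝ)..s, f t) = (∫ t in (0 : ℝ)..N, f t) + ∫ t in N..s, f t := by
    rw [← intervalIntegral.integral_interval_sub_left (hfi s) (hfi N), add_sub_cancel]
  rw [div_lt_iff₀ hs2] at hinit_lt
  rw [dist_zero_right, norm_div, Real.norm_of_nonneg hs2.le, div_lt_iff₀ hs2, hsplit]
  calc _ ≤ ‖∫ t in (0 : ℝ)..N, f t‖ + ‖∫ t in N..s, f t‖ := norm_add_le _ _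
    _ < ε * s ^ 2 := by nlinarith [sq_nonneg N]

theorem exists_isMaxOn_Ioi_of_tendsto {g : ℝ → ℝ} {a L x₀ : ℝ} (hg : ContinuousOn g (Ioi a))
    (hleft : Tendsto g (𝓝[>] a) (𝓝 L)) (htop : Tendsto g atTop (𝓝 L)) (hx₀ : a < x₀)
    (hL : L < g x₀) : ∃ x > a, IsMaxOn g (Ioi a) x := by
  obtain ⟨u, hau, hu⟩ := mem_nhdsGT_iff_exists_Ioc_subset.1 (hleft.eventually_lt_const hL)
  obtain ⟨M, hM⟩ := eventually_atTop.1 (htop.eventually_lt_const hL)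
  set c := min u x₀
  have hac : a < c := lt_min hau hx₀
  have hx₀mem : x₀ ∈ Icc c (max M x₀) := ⟨min_le_right _ _, le_max_right _ _⟩
  obtain ⟨x, hx, hmax⟩ := isCompact_Icc.exists_isMaxOn ⟨x₀, hx₀mem⟩
    (hg.mono fun y hy => hac.trans_le hy.1)
  have hgx : g x₀ ≤ g x := hmax hx₀mem
  refine ⟨x, hac.trans_le hx.1, fun y (hy : a < y) => ?_⟩
  rcases lt_or_ge y c with hyc | hcy
  · exact (hu ⟨hy, hyc.le.trans (min_le_left _ _)⟩).le.trans hgx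
  rcases le_or_gt y (max M x₀) with hyM | hMy
  · exact hmax ⟨hcy, hyM⟩
  · exact (hM y ((le_max_left _ _).trans hMy.le)).le.trans hgx

theorem stmt_2_general (f : ℝ → ℝ) (hf : Continuous f)
    (hf1 : Tendsto (fun s => f s / s) (nhdsWithin 0 (Set.Ioi 0)) (nhds 0))
    (hf2 : Tendsto (fun s => f s / s) atTop (nhds 0))
    (hf3 : ∃ s₀ > (0 : ℝ), 0 < ∫ t in (0:ℝ)..s₀, f t)
    (e q : ℝ) (he : 0 < e) (hq : 0 < q)
    (F : ℝ → ℝ) (hF : ∀ s, F s = ∫ t in (0:ℝ)..s, f t) :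
    ∃ s > (0 : ℝ), 0 < 4 * F s / (2 * s ^ 2 + e * q * s ^ 4) ∧
      ∀ t > (0 : ℝ),
        4 * F t / (2 * t ^ 2 + e * q * t ^ 4) ≤ 4 * F s / (2 * s ^ 2 + e * q * s ^ 4) := by
  obtain rfl : F = fun s => ∫ t in (0 : ℝ)..s, f t := funext hF
  obtain ⟨s₀, hs₀, hFs₀⟩ := hf3
  set g := fun s => 4 * (∫ t in (0 : ℝ)..s, f t) / (2 * s ^ 2 + e * q * s ^ 4)
  -- valid also at `s = 0`, where both sides are the junk value `0`
  have hg : g = fun s => 4 * ((∫ t in (0 : ℝ)..s, f t) / s ^ 2) / (2 + e * q * s ^ 2) := by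
    ext s
    simp only [g]
    rw [mul_div_assoc', div_div]
    ring
  have hgcont : ContinuousOn g (Ioi 0) := by
    have hFcont := intervalIntegral.continuous_primitive (μ := volume) hf.intervalIntegrable 0
    exact (continuous_const.mul hFcont).continuousOn.div (by fun_prop)
      fun s (hs : 0 < s) => by positivity
  have hleft : Tendsto g (𝓝[>] 0) (𝓝 0) := by
    rw [hg]
    simpa only [Pi.div_def, mul_zero, zero_div] using
      ((tendsto_integral_div_sq_nhdsGT_zero hf1).const_mul 4).div
      (((by fun_prop : Continuous fun s : ℝ => 2 + e * q * s ^ 2).tendsto 0).mono_left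
        nhdsWithin_le_nhds) (by positivity)
  have htop : Tendsto g atTop (𝓝 0) := by
    rw [hg]
    exact ((tendsto_integral_div_sq_atTop (hf.intervalIntegrable 0) hf2).const_mul 4).div_atTop
      (tendsto_atTop_add_const_left _ 2
        ((tendsto_pow_atTop two_ne_zero).const_mul_atTop (mul_pos he hq)))
  have hgs₀ : 0 < g s₀ := by positivity
  obtain ⟨s, hs, hmax⟩ := exists_isMaxOn_Ioi_of_tendsto hgcont hleft htop hs₀ hgs₀
  exact ⟨s, hs, hgs₀.trans_le (hmax hs₀), fun t ht => hmax ht⟩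

theorem stmt_2 (f : ℝ → ℝ) (hf : Continuous f)
    (hneg : ∀ s ≤ (0 : ℝ), f s = 0)
    (hf1 : Tendsto (fun s => f s / s) (nhdsWithin 0 (Set.Ioi 0)) (nhds 0))
    (hf2 : Tendsto (fun s => f s / s) atTop (nhds 0))
    (hf3 : ∃ s₀ > (0 : ℝ), 0 < ∫ t in (0:ℝ)..s₀, f t)
    (e q : ℝ) (he : 0 < e) (hq : 0 < q)
    (F : ℝ → ℝ) (hF : ∀ s, F s = ∫ t in (0:ℝ)..s, f t) :
    ∃ s > (0 : ℝ), 0 < 4 * F s / (2 * s ^ 2 + e * q * s ^ 4) ∧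
      ∀ t > (0 : ℝ),
        4 * F t / (2 * t ^ 2 + e * q * t ^ 4) ≤ 4 * F s / (2 * s ^ 2 + e * q * s ^ 4) :=
  stmt_2_general f hf hf1 hf2 hf3 e q he hq F hF
end

section
/- Let f : [0,∞) → ℝ be continuous satisfying (f₁), (f₂), (f₃) and e, q > 0. Define c_f = max_{s>0} f(s)/s and c_F = max_{s>0} 4F(s)/(2s² + e q s⁴), where F(s) = ∫₀ˢ f(t) dt. Then c_f > c_F (strict inequality). -/
/-!
Integrating `f t ≤ c_f t` gives `F s ≤ c_f s² / 2`, hence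
`4 F(s) / (2 s² + e q s⁴) ≤ c_f · 2 s² / (2 s² + e q s⁴) < c_f`; the last step needs `c_f > 0`,
which follows from the same bound at the point `s₀` of (f₃).
-/

open Filter

theorem intervalIntegral_le_mul_sq_div_two_of_div_le {f : ℝ → ℝ} {c s : ℝ} (hs : 0 ≤ s)
    (hfi : IntervalIntegrable f MeasureTheory.volume 0 s) (hfc : ∀ t > 0, f t / t ≤ c) :
    ∫ t in (0:ℝ)..s, f t ≤ c * s ^ 2 / 2 := by
  calc ∫ t in (0:ℝ)..s, f t ≤ ∫ t in (0:ℝ)..s, c * t :=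
        intervalIntegral.integral_mono_on_of_le_Ioo hs hfi
          ((continuous_const_mul c).intervalIntegrable 0 s)
          fun t ht => (div_le_iff₀ ht.1).1 (hfc t ht.1)
    _ = c * s ^ 2 / 2 := by rw [intervalIntegral.integral_const_mul, integral_id]; ring

theorem four_mul_div_lt_of_le_mul_sq_div_two {c k s x : ℝ} (hc : 0 < c) (hk : 0 < k)
    (hs : 0 < s) (hx : x ≤ c * s ^ 2 / 2) : 4 * x / (2 * s ^ 2 + k * s ^ 4) < c := by
  rw [div_lt_iff₀ (by positivity)]
  nlinarith [mul_pos (mul_pos hc hk) (pow_pos hs 4)]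

theorem stmt_3_general (f : ℝ → ℝ) (hf : Continuous f)
    (hf3 : ∃ s₀ > (0 : ℝ), 0 < ∫ t in (0:ℝ)..s₀, f t)
    (e q : ℝ) (he : 0 < e) (hq : 0 < q)
    (F : ℝ → ℝ) (hF : ∀ s, F s = ∫ t in (0:ℝ)..s, f t)
    (cf cF : ℝ)
    (hcf : IsGreatest ((fun s => f s / s) '' Set.Ioi 0) cf)
    (hcF : IsGreatest ((fun s => 4 * F s / (2 * s ^ 2 + e * q * s ^ 4)) '' Set.Ioi 0) cF) :
    cF < cf := by
  have hF_le : ∀ s, 0 ≤ s → F s ≤ cf * s ^ 2 / 2 := fun s hs => by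
    rw [hF]
    exact intervalIntegral_le_mul_sq_div_two_of_div_le hs (hf.intervalIntegrable 0 s)
      fun t ht => hcf.2 ⟨t, ht, rfl⟩
  have hcf_pos : 0 < cf := by
    obtain ⟨s₀, hs₀, hFs₀⟩ := hf3
    have := hF_le s₀ hs₀.le
    rw [hF] at this
    nlinarith [sq_nonneg s₀]
  obtain ⟨s, hs, rfl⟩ := hcF.1
  exact four_mul_div_lt_of_le_mul_sq_div_two hcf_pos (mul_pos he hq) hs (hF_le s hs.le)

theorem stmt_3 (f : ℝ → ℝ) (hf : Continuous f)
    (hneg : ∀ s ≤ (0 : ℝ), f s = 0)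
    (hf1 : Tendsto (fun s => f s / s) (nhdsWithin 0 (Set.Ioi 0)) (nhds 0))
    (hf2 : Tendsto (fun s => f s / s) atTop (nhds 0))
    (hf3 : ∃ s₀ > (0 : ℝ), 0 < ∫ t in (0:ℝ)..s₀, f t)
    (e q : ℝ) (he : 0 < e) (hq : 0 < q)
    (F : ℝ → ℝ) (hF : ∀ s, F s = ∫ t in (0:ℝ)..s, f t)
    (cf cF : ℝ)
    (hcf : IsGreatest ((fun s => f s / s) '' Set.Ioi 0) cf)
    (hcF : IsGreatest ((fun s => 4 * F s / (2 * s ^ 2 + e * q * s ^ 4)) '' Set.Ioi 0) cF) :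
    cF < cf :=
  stmt_3_general f hf hf3 e q he hq F hF cf cF hcf hcF
end

section
/- Let g : [1,∞) → ℝ be continuous with g(1) = −1, such that s ↦ g(s)/s is non-decreasing on [1,∞). Let G(s) = ∫₁ˢ g(t) dt. Then the function s ↦ G(s)/((s² − 1)/2) is non-decreasing on (1,∞). -/
/-!
Writing `g t = φ t * t` with `φ t = g t / t` monotone, and `(s ^ 2 - 1) / 2 = ∫₁ˢ t dt`, the
quotient `G s / ((s ^ 2 - 1) / 2)` is the average of `φ` over `[1, s]` with weight `t`. By
monotonicity the average over `[1, s₁]` is at most `φ s₁` and the one over `[s₁, s₂]` at least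
`φ s₁`, so their mediant, the average over `[1, s₂]`, is at least the first.
-/

open Set intervalIntegral

lemma div_le_add_div_add {p q r s c : ℝ} (hq : 0 < q) (hs : 0 ≤ s) (hp : p ≤ c * q)
    (hr : c * s ≤ r) : p / q ≤ (p + r) / (q + s) := by
  rw [div_le_div_iff₀ hq (by linarith)]
  nlinarith

theorem div_integral_mul_mono {φ w : ℝ → ℝ} {a s₁ s₂ : ℝ} (hφ : MonotoneOn φ (Icc a s₂))
    (hw : ContinuousOn w (Icc a s₂)) (hw₀ : ∀ t ∈ Icc a s₂, 0 ≤ w t) (ha : a ≤ s₁)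
    (h12 : s₁ ≤ s₂) (hpos : 0 < ∫ t in a..s₁, w t) :
    (∫ t in a..s₁, φ t * w t) / (∫ t in a..s₁, w t) ≤
      (∫ t in a..s₂, φ t * w t) / (∫ t in a..s₂, w t) := by
  have hsub : ∀ {b c}, a ≤ b → b ≤ c → c ≤ s₂ → uIcc b c ⊆ Icc a s₂ := fun hb hbc hc => by
    rw [uIcc_of_le hbc]; exact Icc_subset_Icc hb hc
  have hwi : ∀ {b c}, a ≤ b → b ≤ c → c ≤ s₂ → IntervalIntegrable w MeasureTheory.volume b c :=
    fun hb hbc hc => (hw.mono (hsub hb hbc hc)).intervalIntegrable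
  have hφwi : ∀ {b c}, a ≤ b → b ≤ c → c ≤ s₂ →
      IntervalIntegrable (fun t => φ t * w t) MeasureTheory.volume b c := fun hb hbc hc =>
    ((hφ.mono (hsub hb hbc hc)).intervalIntegrable).mul_continuousOn (hw.mono (hsub hb hbc hc))
  have hs₁ : s₁ ∈ Icc a s₂ := ⟨ha, h12⟩
  have hleft : ∫ t in a..s₁, φ t * w t ≤ φ s₁ * ∫ t in a..s₁, w t := by
    rw [← integral_const_mul]
    refine integral_mono_on ha (hφwi le_rfl ha h12) ((hwi le_rfl ha h12).const_mul _)
      fun t ht => ?_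
    have ht' : t ∈ Icc a s₂ := ⟨ht.1, ht.2.trans h12⟩
    exact mul_le_mul_of_nonneg_right (hφ ht' hs₁ ht.2) (hw₀ t ht')
  have hright : φ s₁ * ∫ t in s₁..s₂, w t ≤ ∫ t in s₁..s₂, φ t * w t := by
    rw [← integral_const_mul]
    refine integral_mono_on h12 ((hwi ha h12 le_rfl).const_mul _) (hφwi ha h12 le_rfl)
      fun t ht => ?_
    have ht' : t ∈ Icc a s₂ := ⟨ha.trans ht.1, ht.2⟩
    exact mul_le_mul_of_nonneg_right (hφ hs₁ ht' ht.1) (hw₀ t ht')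
  have hw₁₂ : 0 ≤ ∫ t in s₁..s₂, w t :=
    integral_nonneg h12 fun t ht => hw₀ t ⟨ha.trans ht.1, ht.2⟩
  rw [← integral_add_adjacent_intervals (hφwi le_rfl ha h12) (hφwi ha h12 le_rfl),
    ← integral_add_adjacent_intervals (hwi le_rfl ha h12) (hwi ha h12 le_rfl)]
  exact div_le_add_div_add hpos hw₁₂ hleft hright

theorem stmt_6_general (g : ℝ → ℝ)
    (hmono : ∀ s₁ s₂ : ℝ, 1 ≤ s₁ → s₁ ≤ s₂ → g s₁ / s₁ ≤ g s₂ / s₂)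
    (G : ℝ → ℝ) (hG : ∀ s, G s = ∫ t in (1:ℝ)..s, g t) :
    ∀ s₁ s₂ : ℝ, 1 < s₁ → s₁ ≤ s₂ →
      G s₁ / ((s₁ ^ 2 - 1) / 2) ≤ G s₂ / ((s₂ ^ 2 - 1) / 2) := by
  intro s₁ s₂ hs₁ h12
  have hG' : ∀ s, 1 ≤ s → G s = ∫ t in (1:ℝ)..s, g t / t * t := fun s hs => by
    rw [hG]
    refine integral_congr fun t ht => ?_
    rw [uIcc_of_le hs] at ht
    field_simp [(zero_lt_one.trans_le ht.1).ne']
  have hden : ∀ s : ℝ, (s ^ 2 - 1) / 2 = ∫ t in (1:ℝ)..s, t := fun s => by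
    rw [integral_id]; ring
  rw [hG' s₁ hs₁.le, hG' s₂ (hs₁.le.trans h12), hden, hden]
  refine div_integral_mul_mono (fun a ha b _ hab => hmono a b ha.1 hab) continuousOn_id
    (fun t ht => zero_le_one.trans ht.1) hs₁.le h12 ?_
  rw [← hden]
  nlinarith

theorem stmt_6 (g : ℝ → ℝ) (hg : ContinuousOn g (Set.Ici 1))
    (hg1 : g 1 = -1)
    (hmono : ∀ s₁ s₂ : ℝ, 1 ≤ s₁ → s₁ ≤ s₂ → g s₁ / s₁ ≤ g s₂ / s₂)
    (G : ℝ → ℝ) (hG : ∀ s, G s = ∫ t in (1:ℝ)..s, g t) :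
    ∀ s₁ s₂ : ℝ, 1 < s₁ → s₁ ≤ s₂ →
      G s₁ / ((s₁ ^ 2 - 1) / 2) ≤ G s₂ / ((s₂ ^ 2 - 1) / 2) :=
  stmt_6_general g hmono G hG
end

section
/- Let a > 1 and define f : [0,∞) → ℝ by f(s) = 0 for 0 ≤ s < 1, f(s) = s − 1 for 1 ≤ s < a, and f(s) = a − 1 for s ≥ a (i.e., g(s) = −1). Then max_{s>0} f(s)/s = (a−1)/a and max_{s>0} 2F(s)/s² = (a−1)/(a+1), where F(s) = ∫₀ˢ f(t) dt. -/
/-!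
Writing `f s = max (s - 1) 0 - max (s - a) 0` gives `2 F s = max (s - 1) 0 ^ 2 - max (s - a) 0 ^ 2`.
Both bounds then reduce to polynomial inequalities on the three ranges `s ≤ 1`, `1 ≤ s ≤ a`, `a ≤ s`:
`f s / s` is maximal at `s = a`, and on `[a, ∞)` the gap
`(a - 1) s ^ 2 - (a + 1) · 2 F s = (a - 1) (s - (a + 1)) ^ 2` shows that `2 F s / s ^ 2` is maximal at
`s = a + 1`.
-/

open Set intervalIntegral MeasureTheory

theorem integral_zero_max_zero (b : ℝ) : ∫ x in (0 : ℝ)..b, max x 0 = max b 0 ^ 2 / 2 := by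
  rcases le_total 0 b with hb | hb
  · rw [integral_congr (f := fun x => max x 0) (g := fun x => x) fun x hx => max_eq_left (uIcc_of_le hb ▸ hx).1, integral_id,
      max_eq_left hb]
    ring
  · rw [integral_congr (f := fun x => max x 0) (g := fun _ => 0) fun x hx => max_eq_right (uIcc_of_ge hb ▸ hx).2,
      intervalIntegral.integral_zero, max_eq_right hb]
    ring

theorem integral_max_zero (a b : ℝ) :
    ∫ x in a..b, max x 0 = (max b 0 ^ 2 - max a 0 ^ 2) / 2 := by
  have hint (u v : ℝ) : IntervalIntegrable (fun x : ℝ => max x 0) volume u v :=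
    (continuous_id.max continuous_const).intervalIntegrable u v
  rw [← integral_interval_sub_left (hint 0 b) (hint 0 a), integral_zero_max_zero,
    integral_zero_max_zero]
  ring

theorem integral_max_sub_zero (c a b : ℝ) :
    ∫ x in a..b, max (x - c) 0 = (max (b - c) 0 ^ 2 - max (a - c) 0 ^ 2) / 2 := by
  rw [integral_comp_sub_right (fun x => max x 0), integral_max_zero]

def ramp (a s : ℝ) : ℝ := max (s - 1) 0 - max (s - a) 0

theorem ite_eq_ramp {a : ℝ} (ha : 1 ≤ a) (s : ℝ) :
    (if s < 1 then 0 else if s < a then s - 1 else a - 1) = ramp a s := by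
  unfold ramp
  split_ifs with h1 h2
  · rw [max_eq_right (by linarith), max_eq_right (by linarith)]; ring
  · rw [max_eq_left (by linarith), max_eq_right (by linarith)]; ring
  · rw [max_eq_left (by linarith), max_eq_left (by linarith)]; ring

theorem integral_ramp {a : ℝ} (ha : 0 ≤ a) (s : ℝ) :
    ∫ t in (0 : ℝ)..s, ramp a t = (max (s - 1) 0 ^ 2 - max (s - a) 0 ^ 2) / 2 := by
  have hint (c : ℝ) : IntervalIntegrable (fun x : ℝ => max (x - c) 0) volume 0 s :=
    ((continuous_id.sub continuous_const).max continuous_const).intervalIntegrable 0 s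
  simp only [ramp]
  rw [integral_sub (hint 1) (hint a), integral_max_sub_zero, integral_max_sub_zero,
    max_eq_right (by norm_num : (0 : ℝ) - 1 ≤ 0), max_eq_right (by linarith : 0 - a ≤ 0)]
  ring

theorem isGreatest_ramp_div {a : ℝ} (ha : 1 < a) :
    IsGreatest ((fun s => ramp a s / s) '' Ioi 0) ((a - 1) / a) := by
  refine ⟨⟨a, by simp only [mem_Ioi]; linarith, ?_⟩, ?_⟩
  · show ramp a a / a = _
    rw [← ite_eq_ramp ha.le, if_neg (by linarith), if_neg (lt_irrefl a)]
  · rintro _ ⟨s, hs : 0 < s, rfl⟩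
    rw [div_le_div_iff₀ hs (by linarith), ramp]
    rcases max_cases (s - 1) 0 with ⟨h1, h1'⟩ | ⟨h1, h1'⟩ <;>
      rcases max_cases (s - a) 0 with ⟨h2, h2'⟩ | ⟨h2, h2'⟩ <;>
      rw [h1, h2] <;> nlinarith

theorem isGreatest_two_mul_integral_ramp_div_sq {a : ℝ} (ha : 1 < a) :
    IsGreatest ((fun s => 2 * (∫ t in (0 : ℝ)..s, ramp a t) / s ^ 2) '' Ioi 0)
      ((a - 1) / (a + 1)) := by
  refine ⟨⟨a + 1, by simp only [mem_Ioi]; linarith, ?_⟩, ?_⟩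
  · simp only [integral_ramp (by linarith : (0 : ℝ) ≤ a)]
    rw [max_eq_left (by linarith), max_eq_left (by linarith),
      div_eq_div_iff (by positivity) (by linarith)]
    ring
  · rintro _ ⟨s, hs : 0 < s, rfl⟩
    simp only [integral_ramp (by linarith : (0 : ℝ) ≤ a)]
    rw [div_le_div_iff₀ (by positivity) (by linarith)]
    rcases max_cases (s - 1) 0 with ⟨h1, h1'⟩ | ⟨h1, h1'⟩ <;>
      rcases max_cases (s - a) 0 with ⟨h2, h2'⟩ | ⟨h2, h2'⟩ <;>
      rw [h1, h2]
    · nlinarith [sq_nonneg (s - (a + 1))]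
    · nlinarith [mul_nonneg h1' (by linarith : 0 ≤ a - s)]
    · linarith
    · nlinarith

theorem stmt_8 (a : ℝ) (ha : 1 < a)
    (f : ℝ → ℝ)
    (hfdef : ∀ s : ℝ, f s = if s < 1 then 0 else if s < a then s - 1 else a - 1)
    (F : ℝ → ℝ) (hF : ∀ s, F s = ∫ t in (0:ℝ)..s, f t) :
    IsGreatest ((fun s => f s / s) '' Set.Ioi 0) ((a - 1) / a) ∧
    IsGreatest ((fun s => 2 * F s / s ^ 2) '' Set.Ioi 0) ((a - 1) / (a + 1)) := by
  obtain rfl : f = ramp a := funext fun s => (hfdef s).trans (ite_eq_ramp ha.le s)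
  obtain rfl : F = fun s => ∫ t in (0 : ℝ)..s, ramp a t := funext hF
  exact ⟨isGreatest_ramp_div ha, isGreatest_two_mul_integral_ramp_div_sq ha⟩
end

section
/- Let a > 1 and f, g, G be as in the paper's example: f(s) = 0 on [0,1), f(s) = s + g(s) on [1,a), f(s) = a + g(a) on [a,∞), with g(1) = −1, g(s)/s non-decreasing, G(s) = ∫₁ˢ g(t) dt, F(s) = ∫₀ˢ f(t) dt. Then max_{s>0} 2F(s)/s² = (a + g(a))²/(a² + 2a·g(a) − 2G(a) + 1), and the maximum is attained on [a,∞). -/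
/-!
On `[1, a]` we have `2F(t)/t² = (t² - 1 + 2G(t))/t²`, and on `[a, ∞)` we have
`2F(t) = 2ct - D` with `c = a + g(a)` and `D = a² + 2a·g(a) - 2G(a) + 1`.
Monotonicity of `g(s)/s` traps `∫ₛᵗ g` between `g(s)/s · (t² - s²)/2` and
`g(t)/t · (t² - s²)/2`. These two bounds make `(t² - 1 + 2G(t))/t²` non-decreasing, so the
ratio on `[1, a]` never beats its value at `a`, and they give `ac ≤ D ≤ 2ac`. On `[a, ∞)`,
`c²t² - D(2ct - D) = (ct - D)²` shows that `(2ct - D)/t² ≤ c²/D`, with equality at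
`t = D/c ≥ a`.
-/

open Set MeasureTheory intervalIntegral

section MonotoneRatio

variable {g : ℝ → ℝ} {s t : ℝ}

theorem intervalIntegrable_of_monotoneOn_div (hs : 0 < s) (hst : s ≤ t)
    (hmono : MonotoneOn (fun u => g u / u) (Icc s t)) : IntervalIntegrable g volume s t := by
  have hprod : IntervalIntegrable (fun u => g u / u * u) volume s t := by
    refine (MonotoneOn.intervalIntegrable ?_).mul_continuousOn continuousOn_id
    rwa [uIcc_of_le hst]
  refine (intervalIntegrable_congr fun u hu => ?_).mp hprod
  rw [uIoc_of_le hst] at hu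
  exact div_mul_cancel₀ _ (hs.trans hu.1).ne'

theorem div_mul_le_integral_of_monotoneOn_div (hs : 0 < s) (hst : s ≤ t)
    (hmono : MonotoneOn (fun u => g u / u) (Icc s t)) :
    g s / s * ((t ^ 2 - s ^ 2) / 2) ≤ ∫ u in s..t, g u := by
  rw [← integral_id, ← intervalIntegral.integral_const_mul]
  refine integral_mono_on hst (intervalIntegrable_id.const_mul _)
    (intervalIntegrable_of_monotoneOn_div hs hst hmono) fun u hu => ?_
  calc g s / s * u ≤ g u / u * u :=
        mul_le_mul_of_nonneg_right (hmono (left_mem_Icc.2 hst) hu hu.1) (hs.le.trans hu.1)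
    _ = g u := div_mul_cancel₀ _ (hs.trans_le hu.1).ne'

theorem integral_le_div_mul_of_monotoneOn_div (hs : 0 < s) (hst : s ≤ t)
    (hmono : MonotoneOn (fun u => g u / u) (Icc s t)) :
    ∫ u in s..t, g u ≤ g t / t * ((t ^ 2 - s ^ 2) / 2) := by
  rw [← integral_id, ← intervalIntegral.integral_const_mul]
  refine integral_mono_on hst (intervalIntegrable_of_monotoneOn_div hs hst hmono)
    (intervalIntegrable_id.const_mul _) fun u hu => ?_
  calc g u = g u / u * u := (div_mul_cancel₀ _ (hs.trans_le hu.1).ne').symm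
    _ ≤ g t / t * u :=
        mul_le_mul_of_nonneg_right (hmono hu (right_mem_Icc.2 hst) hu.2) (hs.le.trans hu.1)

theorem monotoneOn_sq_sub_one_add_two_integral_div_sq
    (hmono : MonotoneOn (fun u => g u / u) (Ici 1)) (hg1 : -1 ≤ g 1) :
    MonotoneOn (fun t => (t ^ 2 - 1 + 2 * ∫ u in (1 : ℝ)..t, g u) / t ^ 2) (Ici 1) := by
  intro t (ht : 1 ≤ t) a (ha : 1 ≤ a) hta
  have hmonoIcc : ∀ x y : ℝ, 1 ≤ x → MonotoneOn (fun u => g u / u) (Icc x y) :=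
    fun x y hx => hmono.mono fun u hu => hx.trans hu.1
  have ht0 : 0 < t := one_pos.trans_le ht
  have hq : -1 ≤ g t / t :=
    calc -1 ≤ g 1 / 1 := by rwa [div_one]
      _ ≤ g t / t := hmono (le_refl (1 : ℝ)) ht ht
  have hGt := integral_le_div_mul_of_monotoneOn_div one_pos ht (hmonoIcc 1 t le_rfl)
  have hGta := div_mul_le_integral_of_monotoneOn_div ht0 hta (hmonoIcc t a ht)
  dsimp only
  rw [← integral_add_adjacent_intervals
    (intervalIntegrable_of_monotoneOn_div one_pos ht (hmonoIcc 1 t le_rfl))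
    (intervalIntegrable_of_monotoneOn_div ht0 hta (hmonoIcc t a ht)),
    div_le_div_iff₀ (by positivity) (by positivity)]
  have hat : 0 ≤ a ^ 2 - t ^ 2 := by nlinarith
  nlinarith [mul_nonneg hat (sub_nonneg.2 hGt), mul_nonneg (sq_nonneg t) (sub_nonneg.2 hGta),
    mul_nonneg hat (neg_le_iff_add_nonneg.1 hq)]

theorem sq_add_two_mul_sub_two_integral_add_one_mem_Icc {a : ℝ} (ha : 1 ≤ a)
    (hmono : MonotoneOn (fun u => g u / u) (Icc 1 a)) (hg1 : -1 ≤ g 1) :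
    a ^ 2 + 2 * a * g a - 2 * (∫ u in (1 : ℝ)..a, g u) + 1 ∈
      Icc (a * (a + g a)) (2 * a * (a + g a)) := by
  have hq : -1 ≤ g a / a :=
    calc -1 ≤ g 1 / 1 := by rwa [div_one]
      _ ≤ g a / a := hmono (left_mem_Icc.2 ha) (right_mem_Icc.2 ha) ha
  have hga : g a = a * (g a / a) := by field_simp
  have hG_le := integral_le_div_mul_of_monotoneOn_div one_pos ha hmono
  have hG_ge := div_mul_le_integral_of_monotoneOn_div one_pos ha hmono
  have ha2 : 0 ≤ a ^ 2 - 1 := by nlinarith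
  constructor <;> nlinarith

end MonotoneRatio

theorem exists_max_affine_div_sq {a c D : ℝ} (ha : 0 < a) (hD_low : a * c ≤ D)
    (hD_high : D ≤ 2 * a * c) :
    ∃ s, a ≤ s ∧ (2 * c * s - D) / s ^ 2 = c ^ 2 / D ∧
      ∀ t, (2 * c * t - D) / t ^ 2 ≤ c ^ 2 / D := by
  have hc : 0 ≤ c := nonneg_of_mul_nonneg_right (by linarith) ha
  rcases hc.eq_or_lt with rfl | hc
  · obtain rfl : D = 0 := by linarith
    exact ⟨a, le_rfl, by simp, fun t => by simp⟩
  have hD : 0 < D := (mul_pos ha hc).trans_le hD_low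
  refine ⟨D / c, (le_div_iff₀ hc).2 (by linarith), by field_simp; ring, fun t => ?_⟩
  rcases eq_or_ne t 0 with rfl | ht
  · simp; positivity
  rw [div_le_div_iff₀ (by positivity) hD]
  nlinarith [sq_nonneg (c * t - D)]

noncomputable def profile (a : ℝ) (g : ℝ → ℝ) (s : ℝ) : ℝ :=
  if s < 1 then 0 else if s < a then s + g s else a + g a

section Profile

variable {a : ℝ} {g : ℝ → ℝ}

theorem profile_eqOn_Icc_zero_one (ha : 1 ≤ a) (hg1 : g 1 = -1) :
    EqOn (profile a g) (fun _ => 0) (Icc 0 1) := by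
  rintro u ⟨-, hu1⟩
  rcases hu1.lt_or_eq with hu1 | rfl
  · simp [profile, hu1]
  · rcases ha.lt_or_eq with ha | rfl <;> simp [profile, ha, hg1]

theorem profile_eqOn_Icc_one : EqOn (profile a g) (fun u => u + g u) (Icc 1 a) := by
  rintro u ⟨hu1, hua⟩
  rcases hua.lt_or_eq with hua | rfl <;> simp [profile, hu1.not_gt, hua]

theorem profile_eqOn_Ici (ha : 1 ≤ a) : EqOn (profile a g) (fun _ => a + g a) (Ici a) := by
  intro u (hu : a ≤ u)
  simp [profile, (ha.trans hu).not_gt, hu.not_gt]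

theorem intervalIntegrable_profile (ha : 1 ≤ a) (hg1 : g 1 = -1)
    (hgi : IntervalIntegrable g volume 1 a) {t : ℝ} (ht : 0 ≤ t) :
    IntervalIntegrable (profile a g) volume 0 t := by
  have h01 : IntervalIntegrable (profile a g) volume 0 1 := by
    refine (intervalIntegrable_congr ?_).mpr (intervalIntegrable_const (c := (0 : ℝ)))
    exact (profile_eqOn_Icc_zero_one ha hg1).mono (by simp [uIoc_of_le, Ioc_subset_Icc_self])
  have h1a : IntervalIntegrable (profile a g) volume 1 a := by
    refine (intervalIntegrable_congr ?_).mpr (intervalIntegrable_id.add hgi)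
    exact profile_eqOn_Icc_one.mono (by simp [uIoc_of_le ha, Ioc_subset_Icc_self])
  have hat : IntervalIntegrable (profile a g) volume a (max a t) := by
    refine (intervalIntegrable_congr ?_).mpr (intervalIntegrable_const (c := a + g a))
    exact (profile_eqOn_Ici ha).mono fun u hu => by
      rw [uIoc_of_le (le_max_left a t)] at hu; exact hu.1.le
  refine ((h01.trans h1a).trans hat).mono_set ?_
  rw [uIcc_of_le ht, uIcc_of_le (by linarith [le_max_left a t])]
  exact Icc_subset_Icc_right (le_max_right a t)

theorem integral_profile_of_le_one (ha : 1 ≤ a) (hg1 : g 1 = -1) {t : ℝ} (ht : t ∈ Icc 0 1) :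
    ∫ u in 0..t, profile a g u = 0 := by
  rw [integral_congr ((profile_eqOn_Icc_zero_one ha hg1).mono ?_), intervalIntegral.integral_zero]
  rw [uIcc_of_le ht.1]
  exact Icc_subset_Icc_right ht.2

theorem two_mul_integral_profile (ha : 1 ≤ a) (hg1 : g 1 = -1)
    (hgi : IntervalIntegrable g volume 1 a) {t : ℝ} (ht : t ∈ Icc 1 a) :
    2 * ∫ u in 0..t, profile a g u = t ^ 2 - 1 + 2 * ∫ u in (1 : ℝ)..t, g u := by
  have hsub : uIcc 1 t ⊆ Icc 1 a := by
    rw [uIcc_of_le ht.1]; exact Icc_subset_Icc_right ht.2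
  have hgt : IntervalIntegrable g volume 1 t := hgi.mono_set (by rwa [uIcc_of_le ha])
  rw [← integral_add_adjacent_intervals (intervalIntegrable_profile ha hg1 hgi zero_le_one)
      ((intervalIntegrable_profile ha hg1 hgi zero_le_one).symm.trans
        (intervalIntegrable_profile ha hg1 hgi (zero_le_one.trans ht.1))),
    integral_profile_of_le_one ha hg1 (right_mem_Icc.2 zero_le_one),
    integral_congr (profile_eqOn_Icc_one.mono hsub), integral_add intervalIntegrable_id hgt,
    integral_id]
  ring

theorem two_mul_integral_profile_of_le (ha : 1 ≤ a) (hg1 : g 1 = -1)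
    (hgi : IntervalIntegrable g volume 1 a) {t : ℝ} (ht : a ≤ t) :
    2 * ∫ u in 0..t, profile a g u =
      2 * (a + g a) * t - (a ^ 2 + 2 * a * g a - 2 * (∫ u in (1 : ℝ)..a, g u) + 1) := by
  have h0a := intervalIntegrable_profile ha hg1 hgi (zero_le_one.trans ha)
  have h0t := intervalIntegrable_profile ha hg1 hgi (zero_le_one.trans (ha.trans ht))
  have hsub : uIcc a t ⊆ Ici a := by rw [uIcc_of_le ht]; exact Icc_subset_Ici_self
  rw [← integral_add_adjacent_intervals h0a (h0a.symm.trans h0t), mul_add,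
    two_mul_integral_profile ha hg1 hgi (right_mem_Icc.2 ha),
    integral_congr ((profile_eqOn_Ici ha).mono hsub), intervalIntegral.integral_const,
    smul_eq_mul]
  ring

theorem two_mul_integral_profile_div_sq_le (ha : 1 ≤ a) (hg1 : g 1 = -1)
    (hmono : MonotoneOn (fun u => g u / u) (Ici 1)) {t : ℝ} (ht : t ∈ Icc 1 a) :
    2 * (∫ u in 0..t, profile a g u) / t ^ 2 ≤ 2 * (∫ u in 0..a, profile a g u) / a ^ 2 := by
  have hgi := intervalIntegrable_of_monotoneOn_div one_pos ha (hmono.mono Icc_subset_Ici_self)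
  rw [two_mul_integral_profile ha hg1 hgi ht,
    two_mul_integral_profile ha hg1 hgi (right_mem_Icc.2 ha)]
  exact monotoneOn_sq_sub_one_add_two_integral_div_sq hmono hg1.ge ht.1 ha ht.2

end Profile

theorem stmt_10_general (a : ℝ) (ha : 1 < a)
    (g : ℝ → ℝ)
    (hg1 : g 1 = -1)
    (hmono : ∀ s₁ s₂ : ℝ, 1 ≤ s₁ → s₁ ≤ s₂ → g s₁ / s₁ ≤ g s₂ / s₂)
    (G : ℝ → ℝ) (hG : ∀ s, G s = ∫ t in (1:ℝ)..s, g t)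
    (f : ℝ → ℝ)
    (hfdef : ∀ s : ℝ, f s = if s < 1 then 0 else if s < a then s + g s else a + g a)
    (F : ℝ → ℝ) (hF : ∀ s, F s = ∫ t in (0:ℝ)..s, f t) :
    ∃ s : ℝ, a ≤ s ∧
      2 * F s / s ^ 2 = (a + g a) ^ 2 / (a ^ 2 + 2 * a * g a - 2 * G a + 1) ∧
      ∀ t > (0 : ℝ),
        2 * F t / t ^ 2 ≤ (a + g a) ^ 2 / (a ^ 2 + 2 * a * g a - 2 * G a + 1) := by
  obtain rfl : f = profile a g := funext hfdef
  simp only [hF, hG a]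
  have hratio : MonotoneOn (fun u => g u / u) (Ici 1) := fun s hs t _ hst => hmono s t hs hst
  have hratio1a : MonotoneOn (fun u => g u / u) (Icc 1 a) := hratio.mono Icc_subset_Ici_self
  have hgi := intervalIntegrable_of_monotoneOn_div one_pos ha.le hratio1a
  obtain ⟨hD_low, hD_high⟩ :=
    sq_add_two_mul_sub_two_integral_add_one_mem_Icc ha.le hratio1a hg1.ge
  obtain ⟨s, has, hs_eq, hs_max⟩ := exists_max_affine_div_sq (by linarith) hD_low hD_high
  refine ⟨s, has, by rw [two_mul_integral_profile_of_le ha.le hg1 hgi has, hs_eq], fun t ht => ?_⟩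
  rcases lt_or_ge t 1 with ht1 | ht1
  · rw [integral_profile_of_le_one ha.le hg1 ⟨ht.le, ht1.le⟩]
    simpa using div_nonneg (sq_nonneg (a + g a)) (by nlinarith)
  rcases le_or_gt t a with hta | hta
  · refine (two_mul_integral_profile_div_sq_le ha.le hg1 hratio ⟨ht1, hta⟩).trans ?_
    rw [two_mul_integral_profile_of_le ha.le hg1 hgi le_rfl]
    exact hs_max a
  · rw [two_mul_integral_profile_of_le ha.le hg1 hgi hta.le]
    exact hs_max t

theorem stmt_10 (a : ℝ) (ha : 1 < a)
    (g : ℝ → ℝ) (hg : ContinuousOn g (Set.Ici 1))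
    (hg1 : g 1 = -1)
    (hmono : ∀ s₁ s₂ : ℝ, 1 ≤ s₁ → s₁ ≤ s₂ → g s₁ / s₁ ≤ g s₂ / s₂)
    (G : ℝ → ℝ) (hG : ∀ s, G s = ∫ t in (1:ℝ)..s, g t)
    (f : ℝ → ℝ)
    (hfdef : ∀ s : ℝ, f s = if s < 1 then 0 else if s < a then s + g s else a + g a)
    (F : ℝ → ℝ) (hF : ∀ s, F s = ∫ t in (0:ℝ)..s, f t) :
    ∃ s : ℝ, a ≤ s ∧
      2 * F s / s ^ 2 = (a + g a) ^ 2 / (a ^ 2 + 2 * a * g a - 2 * G a + 1) ∧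
      ∀ t > (0 : ℝ),
        2 * F t / t ^ 2 ≤ (a + g a) ^ 2 / (a ^ 2 + 2 * a * g a - 2 * G a + 1) :=
  stmt_10_general a ha g hg1 hmono G hG f hfdef F hF
end

section
/- Let g(s) = 1/s − 2 for s ≥ 1 and a > 1, and define f as in the paper's example with this g. Then c_f = (a−1)²/a² and ĉ_F := max_{s>0} 2F(s)/s² = (a−1)⁴/(a²(a² − 2 ln a − 1)). -/
/-!
On `[1, a]`, `f(s) = s + 1/s - 2 = (s - 1)²/s`, so `f(s)/s = (1 - 1/s)²` increases up to
`s = a`; beyond `a`, `f` is the constant `c = (a - 1)²/a` and `f(s)/s` decreases.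
For the primitive, `2F(s) = 2cs - D` on `[a, ∞)` with `D = a² - 2 log a - 1`, and
`(2cs - D)/s² ≤ c²/D` is AM-GM, with equality at `s = D/c`; this point lies beyond `a` because
`log a < a - 1`. On `[1, a]` the quotient `2F(s)/s²` is increasing (its derivative is
`4(s - 1 - log s)/s³`), so it stays below its value at `a`.
-/

open Real Set intervalIntegral

lemma add_one_div_sub_two_eq {x : ℝ} (hx : x ≠ 0) : x + (1 / x - 2) = (x - 1) ^ 2 / x := by
  field_simp; ring

lemma integral_add_one_div_sub_two {s : ℝ} (hs : 0 < s) :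
    ∫ t in (1 : ℝ)..s, (t + (1 / t - 2)) = s ^ 2 / 2 + log s - 2 * s + 3 / 2 := by
  have h0 : (0 : ℝ) ∉ uIcc 1 s := fun h => by
    rcases le_total 1 s with h1 | h1
    · rw [uIcc_of_le h1] at h; linarith [h.1]
    · rw [uIcc_of_ge h1] at h; linarith [h.1]
  have hinv : IntervalIntegrable (fun t : ℝ => 1 / t) MeasureTheory.volume 1 s :=
    (continuousOn_const.div continuousOn_id fun t ht h => h0 (h ▸ ht)).intervalIntegrable
  rw [integral_add intervalIntegrable_id (hinv.sub intervalIntegrable_const),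
    integral_sub hinv intervalIntegrable_const, integral_id, integral_one_div h0,
    integral_const, div_one, smul_eq_mul]
  ring

lemma hasDerivAt_two_mul_antideriv_div_sq {x : ℝ} (hx : 0 < x) :
    HasDerivAt (fun x => (x ^ 2 + 2 * log x - 4 * x + 3) / x ^ 2)
      (4 * (x - 1 - log x) / x ^ 3) x := by
  have hsq : HasDerivAt (fun x : ℝ => x ^ 2) (2 * x) x := by simpa using hasDerivAt_pow 2 x
  have hnum : HasDerivAt (fun x => x ^ 2 + 2 * log x - 4 * x + 3) (2 * x + 2 * x⁻¹ - 4) x := by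
    refine (((hsq.add ((hasDerivAt_log hx.ne').const_mul 2)).sub
      ((hasDerivAt_id x).const_mul 4)).add_const 3).congr_deriv ?_
    ring
  refine (hnum.div hsq (pow_ne_zero 2 hx.ne')).congr_deriv ?_
  field_simp
  ring

lemma monotoneOn_two_mul_antideriv_div_sq :
    MonotoneOn (fun x => (x ^ 2 + 2 * log x - 4 * x + 3) / x ^ 2) (Ici 1) := by
  have hderiv := fun x (hx : 1 ≤ x) => hasDerivAt_two_mul_antideriv_div_sq (x := x) (by linarith)
  refine monotoneOn_of_deriv_nonneg (convex_Ici 1)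
    (fun x hx => (hderiv x hx).continuousAt.continuousWithinAt) ?_ ?_
  all_goals
    rw [interior_Ici]
    intro x hx
  · exact (hderiv x (le_of_lt hx)).differentiableAt.differentiableWithinAt
  · have hx0 : 0 < x := by linarith [mem_Ioi.1 hx]
    rw [(hderiv x (le_of_lt hx)).deriv]
    have := log_le_sub_one_of_pos hx0
    positivity

lemma two_mul_mul_sub_div_sq_le (c : ℝ) {D s : ℝ} (hD : 0 < D) (hs : s ≠ 0) :
    (2 * c * s - D) / s ^ 2 ≤ c ^ 2 / D := by
  rw [div_le_div_iff₀ (by positivity) hD]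
  nlinarith [sq_nonneg (c * s - D)]

namespace InvSubTwoExample

noncomputable def f (a s : ℝ) : ℝ :=
  if s < 1 then 0 else if s < a then s + (1 / s - 2) else a + (1 / a - 2)

noncomputable def F (a s : ℝ) : ℝ := ∫ t in (0 : ℝ)..s, f a t

variable {a s : ℝ}

lemma f_of_le_one (ha : 1 < a) (hs : s ≤ 1) : f a s = 0 := by
  rcases hs.lt_or_eq with hs | rfl
  · simp [f, hs]
  · norm_num [f, ha]

lemma f_of_one_le_of_le (h1 : 1 ≤ s) (ha : s ≤ a) : f a s = s + (1 / s - 2) := by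
  rcases ha.lt_or_eq with ha | rfl
  · simp [f, ha, h1.not_gt]
  · simp [f, h1.not_gt]

lemma f_of_le (ha : 1 ≤ a) (hs : a ≤ s) : f a s = a + (1 / a - 2) := by
  simp [f, (ha.trans hs).not_gt, hs.not_gt]

lemma f_eq_comp_clamp (ha : 1 < a) :
    f a = fun s => min (max s 1) a + (1 / min (max s 1) a - 2) := by
  funext s
  rcases le_total s 1 with h1 | h1
  · rw [f_of_le_one ha h1, max_eq_right h1, min_eq_left ha.le]; norm_num
  rcases le_total s a with h2 | h2
  · rw [f_of_one_le_of_le h1 h2, max_eq_left h1, min_eq_left h2]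
  · rw [f_of_le ha.le h2, max_eq_left h1, min_eq_right h2]

lemma continuous_f (ha : 1 < a) : Continuous (f a) := by
  have hclamp : Continuous fun s : ℝ => min (max s 1) a := by fun_prop
  rw [f_eq_comp_clamp ha]
  exact hclamp.add ((continuous_const.div hclamp fun s =>
    (lt_min (one_pos.trans_le (le_max_right s 1)) (one_pos.trans ha)).ne').sub continuous_const)

lemma intervalIntegrable_f (ha : 1 < a) (u v : ℝ) :
    IntervalIntegrable (f a) MeasureTheory.volume u v :=
  (continuous_f ha).intervalIntegrable u v

lemma F_of_le_one (ha : 1 < a) (hs : s ≤ 1) : F a s = 0 := by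
  rw [F, integral_congr (g := fun _ => 0), integral_zero]
  intro t ht
  exact f_of_le_one ha (ht.2.trans (sup_le zero_le_one hs))

lemma F_of_one_le_of_le (ha : 1 < a) (h1 : 1 ≤ s) (hs : s ≤ a) :
    F a s = s ^ 2 / 2 + log s - 2 * s + 3 / 2 := by
  have hF1 : F a 1 = 0 := F_of_le_one ha le_rfl
  rw [F, ← integral_add_adjacent_intervals (intervalIntegrable_f ha 0 1)
    (intervalIntegrable_f ha 1 s), ← F, hF1, zero_add,
    integral_congr (g := fun t => t + (1 / t - 2)), integral_add_one_div_sub_two (by linarith)]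
  intro t ht
  rw [uIcc_of_le h1] at ht
  exact f_of_one_le_of_le ht.1 (ht.2.trans hs)

lemma F_of_le (ha : 1 < a) (hs : a ≤ s) : F a s = F a a + (a + (1 / a - 2)) * (s - a) := by
  rw [F, ← integral_add_adjacent_intervals (intervalIntegrable_f ha 0 a)
    (intervalIntegrable_f ha a s), ← F, integral_congr (g := fun _ => a + (1 / a - 2)),
    integral_const, smul_eq_mul, mul_comm]
  intro t ht
  rw [uIcc_of_le hs] at ht
  exact f_of_le ha.le ht.1

lemma two_mul_F_of_le (ha : 1 < a) (hs : a ≤ s) :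
    2 * F a s = 2 * ((a - 1) ^ 2 / a) * s - (a ^ 2 - 2 * log a - 1) := by
  have ha0 : a ≠ 0 := by positivity
  rw [F_of_le ha hs, F_of_one_le_of_le ha ha.le le_rfl, add_one_div_sub_two_eq ha0]
  field_simp
  ring

lemma f_div_le (ha : 1 < a) (hs : 0 < s) : f a s / s ≤ (a - 1) ^ 2 / a ^ 2 := by
  have ha0 : 0 < a := by positivity
  rcases le_total s 1 with h1 | h1
  · rw [f_of_le_one ha h1, zero_div]; positivity
  rcases le_total s a with h2 | h2
  · rw [f_of_one_le_of_le h1 h2, add_one_div_sub_two_eq hs.ne', div_div, ← sq,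
      ← div_pow, ← div_pow, sub_div, sub_div, div_self hs.ne', div_self ha0.ne']
    gcongr
    rw [sub_nonneg]; exact div_le_one_of_le₀ h1 hs.le
  · rw [f_of_le ha.le h2, add_one_div_sub_two_eq ha0.ne', div_div, sq a]
    gcongr

lemma isGreatest_f_div (ha : 1 < a) :
    IsGreatest ((fun s => f a s / s) '' Ioi 0) ((a - 1) ^ 2 / a ^ 2) := by
  have ha0 : 0 < a := by positivity
  refine ⟨⟨a, ha0, ?_⟩, ?_⟩
  · show f a a / a = _
    rw [f_of_le ha.le le_rfl, add_one_div_sub_two_eq ha0.ne', div_div, sq a]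
  · rintro _ ⟨s, hs, rfl⟩
    exact f_div_le ha hs

lemma sq_sub_one_lt_sq_sub_two_mul_log_sub_one (ha : 1 < a) :
    (a - 1) ^ 2 < a ^ 2 - 2 * log a - 1 := by
  have := log_lt_sub_one_of_pos (by positivity) ha.ne'
  nlinarith

lemma two_mul_F_div_sq_le_of_le (ha : 1 < a) (hs : a ≤ s) :
    2 * F a s / s ^ 2 ≤ (a - 1) ^ 4 / (a ^ 2 * (a ^ 2 - 2 * log a - 1)) := by
  have hD := (sq_nonneg (a - 1)).trans_lt (sq_sub_one_lt_sq_sub_two_mul_log_sub_one ha)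
  rw [two_mul_F_of_le ha hs]
  calc _ ≤ ((a - 1) ^ 2 / a) ^ 2 / (a ^ 2 - 2 * log a - 1) :=
        two_mul_mul_sub_div_sq_le _ hD (by linarith : 0 < s).ne'
    _ = _ := by rw [div_pow, div_div]; ring

lemma two_mul_F_div_sq_le (ha : 1 < a) :
    2 * F a s / s ^ 2 ≤ (a - 1) ^ 4 / (a ^ 2 * (a ^ 2 - 2 * log a - 1)) := by
  have hD := (sq_nonneg (a - 1)).trans_lt (sq_sub_one_lt_sq_sub_two_mul_log_sub_one ha)
  rcases le_total s 1 with h1 | h1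
  · rw [F_of_le_one ha h1, mul_zero, zero_div]; positivity
  rcases le_total s a with h2 | h2
  · have hF : ∀ x, 1 ≤ x → x ≤ a →
        2 * F a x / x ^ 2 = (x ^ 2 + 2 * log x - 4 * x + 3) / x ^ 2 := by
      intro x hx1 hxa
      rw [F_of_one_le_of_le ha hx1 hxa]
      ring
    calc 2 * F a s / s ^ 2 = (s ^ 2 + 2 * log s - 4 * s + 3) / s ^ 2 := hF s h1 h2
      _ ≤ (a ^ 2 + 2 * log a - 4 * a + 3) / a ^ 2 :=
        monotoneOn_two_mul_antideriv_div_sq h1 ha.le h2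
      _ = 2 * F a a / a ^ 2 := (hF a ha.le le_rfl).symm
      _ ≤ _ := two_mul_F_div_sq_le_of_le ha le_rfl
  · exact two_mul_F_div_sq_le_of_le ha h2

lemma isGreatest_two_mul_F_div_sq (ha : 1 < a) :
    IsGreatest ((fun s => 2 * F a s / s ^ 2) '' Ioi 0)
      ((a - 1) ^ 4 / (a ^ 2 * (a ^ 2 - 2 * log a - 1))) := by
  have hgap := sq_sub_one_lt_sq_sub_two_mul_log_sub_one ha
  have hD := (sq_nonneg (a - 1)).trans_lt hgap
  have ha1 : a - 1 ≠ 0 := sub_ne_zero.2 ha.ne'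
  set t := a * (a ^ 2 - 2 * log a - 1) / (a - 1) ^ 2 with ht
  have hat : a ≤ t := by
    rw [le_div_iff₀ (by positivity)]
    nlinarith
  refine ⟨⟨t, (by positivity : 0 < a).trans_le hat, ?_⟩, ?_⟩
  · show 2 * F a t / t ^ 2 = _
    rw [two_mul_F_of_le ha hat, ht]
    field_simp
    ring
  · rintro _ ⟨s, -, rfl⟩
    exact two_mul_F_div_sq_le ha

end InvSubTwoExample

theorem stmt_12 (a : ℝ) (ha : 1 < a)
    (f : ℝ → ℝ)
    (hfdef : ∀ s : ℝ,
      f s = if s < 1 then 0 else if s < a then s + (1 / s - 2) else a + (1 / a - 2))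
    (F : ℝ → ℝ) (hF : ∀ s, F s = ∫ t in (0:ℝ)..s, f t) :
    IsGreatest ((fun s => f s / s) '' Set.Ioi 0) ((a - 1) ^ 2 / a ^ 2) ∧
    IsGreatest ((fun s => 2 * F s / s ^ 2) '' Set.Ioi 0)
      ((a - 1) ^ 4 / (a ^ 2 * (a ^ 2 - 2 * Real.log a - 1))) := by
  obtain rfl : f = InvSubTwoExample.f a := funext hfdef
  obtain rfl : F = InvSubTwoExample.F a := funext hF
  exact ⟨InvSubTwoExample.isGreatest_f_div ha, InvSubTwoExample.isGreatest_two_mul_F_div_sq ha⟩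
end
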